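/- arXiv:1904.04955 — 3 statements merged into one kernel-verified Lean document; each statement's English description precedes it below -/
import Mathlib

section
/- Let α, β be coprime integers with 0 < β < α, and let α/β = [b_1, ..., b_r] and α/(α−β) = [a_1, ..., a_n] be negative continued fraction expansions with all entries at least 2. Then the Riemenschneider duality holds: n = (sum over i of (b_i − 1)) − r + 1 and r = (sum over j of (a_j − 1)) − n + 1. -/
/-- Negative (Hirzebruch–Jung) continued fraction:
`[b] = b`, `[b₁,...,b_r] = b₁ - 1/[b₂,...,b_r]`. -/
def ncf : List ℤ → ℚ
  | [] => 0
  | b :: l => if l = [] then (b : ℚ) else (b : ℚ) - 1 / ncf l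

/-!
Write `x = [b₁, …, b_r]` and `y = [a₁, …, a_n]`. Duality means `1/x + 1/y = 1`, which is
symmetric in the two expansions, so the second identity is the first one for the swapped pair.
Since `b₁ - 1 < x ≤ b₁` and exactly one of `x > 2 > y`, `x < 2 < y`, `x = y = 2` holds, the
heads are forced: if `b₁ ≥ 3` then `a₁ = 2` and `[b₁ - 1, b₂, …, b_r]` is dual to
`[a₂, …, a_n]`; if `b₁ = 2` and `r > 1` then `a₁ ≥ 3` and `[b₂, …, b_r]` is dual to
`[a₁ - 1, a₂, …, a_n]`. Both moves preserve `n - Σ (bᵢ - 1) + r`, and they lead from `B` to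
`[2]`, whose dual is `[2]`.
-/

section ncf

variable {l : List ℤ}

theorem ncf_singleton (b : ℤ) : ncf [b] = b := by simp [ncf]

theorem ncf_cons (b : ℤ) (hl : l ≠ []) : ncf (b :: l) = b - (ncf l)⁻¹ := by
  simp [ncf, hl]

theorem ncf_cons_add_one (b : ℤ) (l : List ℤ) : ncf ((b + 1) :: l) = ncf (b :: l) + 1 := by
  rcases eq_or_ne l [] with rfl | hl
  · simp [ncf_singleton]
  · rw [ncf_cons _ hl, ncf_cons _ hl]; push_cast; ring

theorem one_lt_ncf (hl : l ≠ []) (h2 : ∀ x ∈ l, 2 ≤ x) : 1 < ncf l := by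
  induction l with
  | nil => exact absurd rfl hl
  | cons b l ih =>
    have hb : (2 : ℚ) ≤ b := by exact_mod_cast h2 b List.mem_cons_self
    rcases eq_or_ne l [] with rfl | hl'
    · rw [ncf_singleton]; linarith
    · have hy := ih hl' fun x hx => h2 x (List.mem_cons_of_mem b hx)
      have : (ncf l)⁻¹ < 1 := inv_lt_one_of_one_lt₀ hy
      rw [ncf_cons b hl']; linarith

theorem ncf_cons_lt (b : ℤ) (hl : l ≠ []) (h2 : ∀ x ∈ l, 2 ≤ x) : ncf (b :: l) < b := by
  rw [ncf_cons b hl, sub_lt_self_iff, inv_pos]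
  linarith [one_lt_ncf hl h2]

theorem ncf_cons_le (b : ℤ) (h2 : ∀ x ∈ l, 2 ≤ x) : ncf (b :: l) ≤ b := by
  rcases eq_or_ne l [] with rfl | hl
  · rw [ncf_singleton]
  · exact (ncf_cons_lt b hl h2).le

theorem sub_one_lt_ncf_cons (b : ℤ) (h2 : ∀ x ∈ l, 2 ≤ x) : (b : ℚ) - 1 < ncf (b :: l) := by
  rcases eq_or_ne l [] with rfl | hl
  · rw [ncf_singleton]; linarith
  · have : (ncf l)⁻¹ < 1 := inv_lt_one_of_one_lt₀ (one_lt_ncf hl h2)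
    rw [ncf_cons b hl]; linarith

theorem eq_two_of_ncf_cons_le_two {a : ℤ} (h2 : ∀ x ∈ a :: l, 2 ≤ x) (hy : ncf (a :: l) ≤ 2) :
    a = 2 := by
  have h1 := sub_one_lt_ncf_cons a fun x hx => h2 x (List.mem_cons_of_mem a hx)
  have : a < 3 := by exact_mod_cast (by linarith : (a : ℚ) < 3)
  linarith [h2 a List.mem_cons_self]

end ncf

section InvAddInv

variable {K : Type*} [Field K] [LinearOrder K] [IsStrictOrderedRing K] {x y : K}

theorem lt_two_of_inv_add_inv_eq_one (hy : 0 < y) (h : x⁻¹ + y⁻¹ = 1) (hx : 2 < x) : y < 2 := by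
  have : x⁻¹ < 2⁻¹ := inv_strictAnti₀ two_pos hx
  exact (inv_lt_inv₀ two_pos hy).mp (by linarith)

theorem two_lt_of_inv_add_inv_eq_one (hx : 0 < x) (hy : 0 < y) (h : x⁻¹ + y⁻¹ = 1)
    (hx2 : x < 2) : 2 < y := by
  have : 2⁻¹ < x⁻¹ := inv_strictAnti₀ hx hx2
  exact (inv_lt_inv₀ hy two_pos).mp (by linarith)

theorem inv_add_inv_eq_one_of_add_one_two_sub_inv {z : K} (hx : 0 < x) (hz : 1 < z)
    (h : (x + 1)⁻¹ + (2 - z⁻¹)⁻¹ = 1) : x⁻¹ + z⁻¹ = 1 := by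
  have hz' : 0 < 2 * z - 1 := by linarith
  field_simp at h ⊢
  linarith

end InvAddInv

structure IsNcfDual (B A : List ℤ) : Prop where
  left_ne_nil : B ≠ []
  right_ne_nil : A ≠ []
  two_le_left : ∀ x ∈ B, 2 ≤ x
  two_le_right : ∀ x ∈ A, 2 ≤ x
  inv_add_inv : (ncf B)⁻¹ + (ncf A)⁻¹ = 1

namespace IsNcfDual

variable {B A l m : List ℤ}

theorem symm (h : IsNcfDual B A) : IsNcfDual A B :=
  ⟨h.right_ne_nil, h.left_ne_nil, h.two_le_right, h.two_le_left, by rw [add_comm, h.inv_add_inv]⟩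

theorem exists_eq_two_cons {c : ℤ} (h : IsNcfDual ((c + 1) :: l) A) (hc : 2 ≤ c) :
    ∃ m, A = 2 :: m ∧ IsNcfDual (c :: l) m := by
  obtain ⟨a, m, rfl⟩ := List.exists_cons_of_ne_nil h.right_ne_nil
  have h2l : ∀ x ∈ c :: l, 2 ≤ x := by
    simpa [hc] using fun x hx => h.two_le_left x (List.mem_cons_of_mem _ hx)
  have h2m : ∀ x ∈ m, 2 ≤ x := fun x hx => h.two_le_right x (List.mem_cons_of_mem a hx)
  have hx := one_lt_ncf (List.cons_ne_nil c l) h2l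
  have hy := one_lt_ncf h.right_ne_nil h.two_le_right
  have hinv := h.inv_add_inv
  rw [ncf_cons_add_one] at hinv
  have hy2 := lt_two_of_inv_add_inv_eq_one (by linarith) hinv (by linarith)
  obtain rfl := eq_two_of_ncf_cons_le_two h.two_le_right hy2.le
  have hm : m ≠ [] := by
    rintro rfl
    rw [ncf_singleton] at hy2
    norm_num at hy2
  rw [ncf_cons _ hm] at hinv
  refine ⟨m, rfl, List.cons_ne_nil c l, hm, h2l, h2m, ?_⟩
  exact inv_add_inv_eq_one_of_add_one_two_sub_inv (by linarith) (one_lt_ncf hm h2m)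
    (by exact_mod_cast hinv)

theorem three_le_head {a : ℤ} (h : IsNcfDual (2 :: l) (a :: m)) (hl : l ≠ []) : 3 ≤ a := by
  have h2l : ∀ x ∈ l, 2 ≤ x := fun x hx => h.two_le_left x (List.mem_cons_of_mem 2 hx)
  have hx2 : ncf (2 :: l) < 2 := by exact_mod_cast ncf_cons_lt 2 hl h2l
  have hy2 := two_lt_of_inv_add_inv_eq_one (by linarith [one_lt_ncf h.left_ne_nil h.two_le_left])
    (by linarith [one_lt_ncf h.right_ne_nil h.two_le_right]) h.inv_add_inv hx2
  have : (2 : ℚ) < a := hy2.trans_le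
    (ncf_cons_le a fun x hx => h.two_le_right x (List.mem_cons_of_mem a hx))
  exact_mod_cast this

theorem eq_singleton_two (h : IsNcfDual [2] A) : A = [2] := by
  obtain ⟨a, m, rfl⟩ := List.exists_cons_of_ne_nil h.right_ne_nil
  have h2m : ∀ x ∈ m, 2 ≤ x := fun x hx => h.two_le_right x (List.mem_cons_of_mem a hx)
  have hy : ncf (a :: m) = 2 := by
    have hinv := h.inv_add_inv
    rw [ncf_singleton] at hinv
    rw [← inv_inj]
    push_cast at hinv
    linarith
  obtain rfl := eq_two_of_ncf_cons_le_two h.two_le_right hy.le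
  rcases eq_or_ne m [] with rfl | hm
  · rfl
  · exact absurd hy (ncf_cons_lt 2 hm h2m).ne

theorem length_eq (h : IsNcfDual B A) :
    (A.length : ℤ) = (B.map (fun b => b - 1)).sum - B.length + 1 := by
  induction B generalizing A with
  | nil => exact absurd rfl h.left_ne_nil
  | cons b l ih =>
    have hb : 2 ≤ b := h.two_le_left b List.mem_cons_self
    induction b, hb using Int.leInduction generalizing A with
    | base =>
      rcases eq_or_ne l [] with rfl | hl
      · rw [h.eq_singleton_two]; rfl
      obtain ⟨a, m, rfl⟩ := List.exists_cons_of_ne_nil h.right_ne_nil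
      obtain ⟨c, rfl⟩ : ∃ c, a = c + 1 := ⟨a - 1, by ring⟩
      have hc : 2 ≤ c := by linarith [h.three_le_head hl]
      obtain ⟨l', hl', h'⟩ := h.symm.exists_eq_two_cons hc
      obtain rfl := (List.cons_inj_right 2).mp hl'
      have := ih h'.symm
      simp only [List.length_cons, List.map_cons, List.sum_cons] at this ⊢
      push_cast at this ⊢
      linarith
    | succ c hc ihc =>
      obtain ⟨m, rfl, h'⟩ := h.exists_eq_two_cons hc
      have := ihc h'
      simp only [List.length_cons, List.map_cons, List.sum_cons] at this ⊢
      push_cast at this ⊢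
      linarith

end IsNcfDual

theorem riemenschneider_duality_general (α β : ℤ)
    (B A : List ℤ) (hBne : B ≠ [])
    (hB2 : ∀ x ∈ B, 2 ≤ x) (hA2 : ∀ x ∈ A, 2 ≤ x)
    (hB : ncf B = (α : ℚ) / (β : ℚ))
    (hA : ncf A = (α : ℚ) / ((α : ℚ) - (β : ℚ))) :
    (A.length : ℤ) = (B.map (fun b => b - 1)).sum - B.length + 1 ∧
    (B.length : ℤ) = (A.map (fun a => a - 1)).sum - A.length + 1 := by
  have hx := one_lt_ncf hBne hB2
  have hα : (α : ℚ) ≠ 0 := by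
    intro h
    rw [h, zero_div] at hB
    linarith
  have hinv : (ncf B)⁻¹ + (ncf A)⁻¹ = 1 := by
    rw [hB, hA, inv_div, inv_div]
    field_simp
    ring
  have hAne : A ≠ [] := by
    rintro rfl
    simp only [ncf, inv_zero, add_zero, inv_eq_one] at hinv
    linarith
  have h : IsNcfDual B A := ⟨hBne, hAne, hB2, hA2, hinv⟩
  exact ⟨h.length_eq, h.symm.length_eq⟩

/-- Riemenschneider duality for dual negative continued fraction expansions of
`α/β` and `α/(α-β)`: `n = Σ(bᵢ-1) - r + 1` and `r = Σ(aⱼ-1) - n + 1`. -/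
theorem riemenschneider_duality (α β : ℤ) (hβ : 0 < β) (hβα : β < α)
    (hcop : Int.gcd α β = 1)
    (B A : List ℤ) (hBne : B ≠ []) (hAne : A ≠ [])
    (hB2 : ∀ x ∈ B, 2 ≤ x) (hA2 : ∀ x ∈ A, 2 ≤ x)
    (hB : ncf B = (α : ℚ) / (β : ℚ))
    (hA : ncf A = (α : ℚ) / ((α : ℚ) - (β : ℚ))) :
    (A.length : ℤ) = (B.map (fun b => b - 1)).sum - B.length + 1 ∧
    (B.length : ℤ) = (A.map (fun a => a - 1)).sum - A.length + 1 :=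
  riemenschneider_duality_general α β B A hBne hB2 hA2 hB hA
end

section
/- Let Γ be the star-shaped graph with a central vertex of weight −b with b ≥ 3 and three arms, where arm i is a linear chain with weights −b_{i1}, ..., −b_{ir_i}, all b_{ij} ≥ 2. Then the intersection matrix of Γ (diagonal entries the weights, off-diagonal entries 1 for adjacent vertices and 0 otherwise) is negative definite. -/
/-!
Put `c i 0 = x₀` (the centre), `c i (k + 1) = x` at the `k`-th vertex of arm `i`, and
`c i (rᵢ + 1) = 0`. Summation by parts along each arm gives
`-xᵀ M x = (b - 3) x₀² + ∑ᵢ ∑ⱼ (bᵢⱼ - 2) c i (j + 1)² + ∑ᵢ ∑_{k ≤ rᵢ} (c i (k + 1) - c i k)²`,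
a sum of nonnegative terms. If all the differences vanish, every `c i` is constant and ends
in `0`, so `x = 0`.
-/

/-- Intersection matrix (over `ℚ`) of the star-shaped graph with a central vertex of
weight `-b` and three arms, where arm `i` is a linear chain of `r i` vertices with
weights `-(w i 0), ..., -(w i (r i - 1))`. Diagonal entries are the weights; entry
`(v, u)` is `1` if `v` and `u` are adjacent and `0` otherwise. -/
def starMatrix (b : ℤ) (r : Fin 3 → ℕ) (w : (i : Fin 3) → Fin (r i) → ℤ) :
    Matrix (Option ((i : Fin 3) × Fin (r i))) (Option ((i : Fin 3) × Fin (r i))) ℚ :=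
  fun v u =>
    match v, u with
    | none, none => -(b : ℚ)
    | none, some ⟨_, j⟩ => if (j : ℕ) = 0 then 1 else 0
    | some ⟨_, j⟩, none => if (j : ℕ) = 0 then 1 else 0
    | some ⟨i, j⟩, some ⟨i', j'⟩ =>
        if i = i' then
          (if (j : ℕ) = (j' : ℕ) then -((w i j : ℤ) : ℚ)
           else if (j : ℕ) + 1 = (j' : ℕ) ∨ (j' : ℕ) + 1 = (j : ℕ) then 1 else 0)
        else 0

open Finset Matrix

theorem sum_range_ite_pred_eq {M : Type*} [AddCommMonoid M] (c : ℕ → M) {n j : ℕ} (hj : j ≤ n) :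
    (if j = 0 then c 0 else 0) + ∑ k ∈ range n, (if k + 1 = j then c (k + 1) else 0) = c j := by
  have := sum_range_succ' (fun m => if m = j then c m else 0) n
  simp only [sum_ite_eq', mem_range, Nat.lt_succ_iff.mpr hj, if_true] at this
  rw [this, add_comm]
  congr 1
  simp [eq_comm]

theorem sum_range_tridiag {R : Type*} [CommRing R] (c : ℕ → R) (d : R) {n j : ℕ} (hj : j < n) :
    (if j = 0 then c 0 else 0) + ∑ k ∈ range n,
        (if j = k then d * c (k + 1) else if j + 1 = k ∨ k + 1 = j then c (k + 1) else 0) =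
      c j + d * c (j + 1) + if j + 1 < n then c (j + 2) else 0 := by
  have split : ∀ k, (if j = k then d * c (k + 1) else if j + 1 = k ∨ k + 1 = j then c (k + 1) else 0)
      = (if k + 1 = j then c (k + 1) else 0) + (if k = j then d * c (k + 1) else 0) +
        (if k = j + 1 then c (k + 1) else 0) := by
    intro k
    split_ifs <;> first | omega | simp
  simp only [split, sum_add_distrib, ← add_assoc, sum_range_ite_pred_eq c hj.le,
    sum_ite_eq', mem_range, hj, if_true]

theorem sum_range_mul_second_diff {R : Type*} [CommRing R] (c : ℕ → R) (n : ℕ) :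
    ∑ j ∈ range n, c (j + 1) * (2 * c (j + 1) - c j - c (j + 2)) =
      ∑ k ∈ range n, (c (k + 1) - c k) ^ 2 + c 0 * (c 1 - c 0) - c n * (c (n + 1) - c n) := by
  induction n with
  | zero => simp
  | succ n ih => rw [sum_range_succ, ih, sum_range_succ]; ring

theorem sum_fin_chain_form_eq {R : Type*} [CommRing R] (c : ℕ → R) {n : ℕ} (a : Fin n → R)
    (hc : c (n + 1) = 0) :
    ∑ j : Fin n, c (j + 1) * (a j * c (j + 1) - c j - c (j + 2)) =
      ∑ j, (a j - 2) * c (j + 1) ^ 2 + ∑ k ∈ range (n + 1), (c (k + 1) - c k) ^ 2 +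
        c 0 * c 1 - c 0 ^ 2 := by
  have split : ∀ j : Fin n, c (j + 1) * (a j * c (j + 1) - c j - c (j + 2)) =
      (a j - 2) * c (j + 1) ^ 2 + c (j + 1) * (2 * c (j + 1) - c j - c (j + 2)) := fun j => by ring
  rw [sum_congr rfl fun j _ => split j, sum_add_distrib,
    Fin.sum_univ_eq_sum_range (fun j => c (j + 1) * (2 * c (j + 1) - c j - c (j + 2))),
    sum_range_mul_second_diff, sum_range_succ, hc]
  ring

theorem apply_eq_apply_zero_of_forall_succ_eq {α : Type*} {c : ℕ → α} {n : ℕ}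
    (h : ∀ k < n, c (k + 1) = c k) : ∀ k ≤ n, c k = c 0 := by
  intro k hk
  induction k with
  | zero => rfl
  | succ k ih => rw [h k hk, ih (by omega)]

variable {r : Fin 3 → ℕ}

/-- The sequence `c i` of the module docstring. -/
def armSeq (x : Option ((i : Fin 3) × Fin (r i)) → ℚ) (i : Fin 3) : ℕ → ℚ
  | 0 => x none
  | k + 1 => if h : k < r i then x (some ⟨i, ⟨k, h⟩⟩) else 0

section armSeq

variable (x : Option ((i : Fin 3) × Fin (r i)) → ℚ) (i : Fin 3)

@[simp] lemma armSeq_zero : armSeq x i 0 = x none := rfl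

@[simp] lemma armSeq_succ_val (j : Fin (r i)) : armSeq x i (j + 1) = x (some ⟨i, j⟩) := by
  simp [armSeq]

lemma armSeq_eq_zero {k : ℕ} (hk : r i < k) : armSeq x i k = 0 := by
  obtain ⟨k, rfl⟩ := Nat.exists_eq_add_one_of_ne_zero (by omega : k ≠ 0)
  simp [armSeq, show ¬ k < r i by omega]

end armSeq

section mulVec

variable (b : ℤ) (w : (i : Fin 3) → Fin (r i) → ℤ) (x : Option ((i : Fin 3) × Fin (r i)) → ℚ)

lemma starMatrix_mulVec_none :
    (starMatrix b r w *ᵥ x) none = -b * x none + ∑ i, armSeq x i 1 := by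
  simp only [mulVec, dotProduct, Fintype.sum_option, Fintype.sum_sigma, starMatrix, ite_mul,
    one_mul, zero_mul, add_right_inj, ← armSeq_succ_val]
  refine sum_congr rfl fun i _ => ?_
  rw [Fin.sum_univ_eq_sum_range (fun k => if k = 0 then armSeq x i (k + 1) else 0), sum_ite_eq']
  split_ifs with h
  · rfl
  · exact (armSeq_eq_zero x i (by simpa using h)).symm

lemma starMatrix_mulVec_some (i : Fin 3) (j : Fin (r i)) :
    (starMatrix b r w *ᵥ x) (some ⟨i, j⟩) =
      armSeq x i j - w i j * armSeq x i (j + 1) + armSeq x i (j + 2) := by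
  simp only [mulVec, dotProduct, Fintype.sum_option, Fintype.sum_sigma, starMatrix, ite_mul,
    one_mul, zero_mul, sum_ite_irrel, sum_const_zero, sum_ite_eq, mem_univ, if_true,
    ← armSeq_succ_val, ← armSeq_zero x i]
  rw [Fin.sum_univ_eq_sum_range (fun k => if (j : ℕ) = k then -(w i j : ℚ) * armSeq x i (k + 1)
    else if (j : ℕ) + 1 = k ∨ k + 1 = j then armSeq x i (k + 1) else 0),
    sum_range_tridiag _ _ j.isLt]
  split_ifs with h
  · ring
  · rw [armSeq_eq_zero x i (k := j + 2) (by omega)]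
    ring

end mulVec

theorem dotProduct_neg_starMatrix_mulVec (b : ℤ) (w : (i : Fin 3) → Fin (r i) → ℤ)
    (x : Option ((i : Fin 3) × Fin (r i)) → ℚ) :
    x ⬝ᵥ (-starMatrix b r w) *ᵥ x =
      ((b : ℚ) - 3) * x none ^ 2 + ∑ i, (∑ j, ((w i j : ℚ) - 2) * armSeq x i (j + 1) ^ 2 +
        ∑ k ∈ range (r i + 1), (armSeq x i (k + 1) - armSeq x i k) ^ 2) := by
  have arm : ∀ i, -∑ j : Fin (r i), x (some ⟨i, j⟩) * (starMatrix b r w *ᵥ x) (some ⟨i, j⟩) =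
      ∑ j, ((w i j : ℚ) - 2) * armSeq x i (j + 1) ^ 2 +
        ∑ k ∈ range (r i + 1), (armSeq x i (k + 1) - armSeq x i k) ^ 2 +
        x none * armSeq x i 1 - x none ^ 2 := by
    intro i
    simp only [starMatrix_mulVec_some, ← armSeq_succ_val x, ← armSeq_zero x i]
    rw [← sum_fin_chain_form_eq _ _ (armSeq_eq_zero x i (Nat.lt_succ_self _)), ← sum_neg_distrib]
    exact sum_congr rfl fun j _ => by ring
  rw [neg_mulVec, dotProduct_neg, dotProduct, Fintype.sum_option, Fintype.sum_sigma,
    starMatrix_mulVec_none, neg_add, ← sum_neg_distrib, sum_congr rfl fun i _ => arm i]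
  simp only [sum_sub_distrib, sum_add_distrib, ← mul_sum, sum_const, card_univ, Fintype.card_fin]
  ring

theorem starMatrix_isSymm (b : ℤ) (w : (i : Fin 3) → Fin (r i) → ℤ) :
    (starMatrix b r w).IsSymm := by
  ext (_ | ⟨i, j⟩) (_ | ⟨i', j'⟩)
  all_goals simp only [transpose_apply, starMatrix]
  by_cases h : i = i'
  · subst h
    simp only [if_true, eq_comm (a := (j : ℕ)), or_comm]
    split_ifs with hj
    · rw [Fin.ext hj]
    all_goals rfl
  · simp [h, Ne.symm h]

theorem exists_armSeq_succ_ne {x : Option ((i : Fin 3) × Fin (r i)) → ℚ} (hx : x ≠ 0) :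
    ∃ i, ∃ k ∈ range (r i + 1), armSeq x i (k + 1) ≠ armSeq x i k := by
  by_contra! h
  have const : ∀ i, ∀ k ≤ r i + 1, armSeq x i k = x none := fun i =>
    apply_eq_apply_zero_of_forall_succ_eq fun k hk => h i k (mem_range.2 hk)
  have hnone : x none = 0 := by
    rw [← const 0 (r 0 + 1) le_rfl, armSeq_eq_zero x 0 (Nat.lt_succ_self _)]
  refine hx (funext fun v => ?_)
  rcases v with _ | ⟨i, j⟩
  · exact hnone
  · rw [← armSeq_succ_val x, const i _ (by omega), hnone, Pi.zero_apply]

theorem starMatrix_negDef_general (b : ℤ) (hb : 3 ≤ b) (r : Fin 3 → ℕ)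
    (w : (i : Fin 3) → Fin (r i) → ℤ) (hw : ∀ i j, 2 ≤ w i j) :
    (-(starMatrix b r w)).PosDef := by
  refine posDef_iff_dotProduct_mulVec.2
    ⟨(isHermitian_iff_isSymm.2 (starMatrix_isSymm b w)).neg, fun x hx => ?_⟩
  rw [star_trivial, dotProduct_neg_starMatrix_mulVec]
  have hcentre : 0 ≤ ((b : ℚ) - 3) * x none ^ 2 :=
    mul_nonneg (sub_nonneg.2 (by exact_mod_cast hb)) (sq_nonneg _)
  have hweights : ∀ i, 0 ≤ ∑ j, ((w i j : ℚ) - 2) * armSeq x i (j + 1) ^ 2 := fun i =>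
    sum_nonneg fun j _ => mul_nonneg (sub_nonneg.2 (by exact_mod_cast hw i j)) (sq_nonneg _)
  obtain ⟨i, k, hk, hne⟩ := exists_armSeq_succ_ne hx
  have hdiff : 0 < ∑ k ∈ range (r i + 1), (armSeq x i (k + 1) - armSeq x i k) ^ 2 :=
    sum_pos' (fun _ _ => sq_nonneg _) ⟨k, hk, sq_pos_of_ne_zero (sub_ne_zero.2 hne)⟩
  have harms : 0 < ∑ i, (∑ j, ((w i j : ℚ) - 2) * armSeq x i (j + 1) ^ 2 +
      ∑ k ∈ range (r i + 1), (armSeq x i (k + 1) - armSeq x i k) ^ 2) :=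
    sum_pos' (fun i _ => add_nonneg (hweights i) (sum_nonneg fun _ _ => sq_nonneg _))
      ⟨i, mem_univ i, add_pos_of_nonneg_of_pos (hweights i) hdiff⟩
  linarith

/-- The intersection matrix of the star-shaped graph with central weight `-b`, `b ≥ 3`,
and three arms with weights `-b_{ij} ≤ -2`, is negative definite. -/
theorem starMatrix_negDef (b : ℤ) (hb : 3 ≤ b) (r : Fin 3 → ℕ) (hr : ∀ i, 0 < r i)
    (w : (i : Fin 3) → Fin (r i) → ℤ) (hw : ∀ i j, 2 ≤ w i j) :
    (-(starMatrix b r w)).PosDef :=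
  starMatrix_negDef_general b hb r w hw
end

section
/- For all nonnegative integers p, q, r, the star-shaped graph Γ_{p,q,r} with central vertex of weight −4 and three arms (one arm of q vertices of weight −2 ending in a vertex of weight −(p+3), one arm of r vertices of weight −2 ending in a vertex of weight −(q+3), and one arm of p vertices of weight −2 ending in a vertex of weight −(r+3)) has a negative definite intersection matrix. -/

lemma sum_ite_nat {n k : ℕ} (hk : k < n) (f : Fin n → ℚ) :
    ∑ j : Fin n, (if (j:ℕ) = k then f j else 0) = f ⟨k, hk⟩ := by
  rw [Finset.sum_eq_single ⟨k, hk⟩]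
  · simp
  · intro b _ hb
    rw [if_neg]
    intro h
    exact hb (Fin.ext h)
  · simp

lemma sum_ite_false {n : ℕ} {P : Fin n → Prop} [DecidablePred P] (h : ∀ j, ¬ P j)
    (f : Fin n → ℚ) : ∑ j : Fin n, (if P j then f j else 0) = 0 := by
  apply Finset.sum_eq_zero
  intro j _
  rw [if_neg (h j)]

lemma shift (n : ℕ) (f : Fin (n+1) → Fin (n+1) → ℚ) :
    ∑ j : Fin (n+1), ∑ j' : Fin (n+1), (if (j:ℕ) + 1 = (j':ℕ) then f j j' else 0)
    = ∑ j : Fin n, f j.castSucc j.succ := by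
  induction n with
  | zero => simp
  | succ n ih =>
    rw [Fin.sum_univ_castSucc (n := n+1)]
    have peel : ∀ j : Fin (n+2),
        ∑ j' : Fin (n+2), (if (j:ℕ) + 1 = (j':ℕ) then f j j' else 0)
        = (∑ j' : Fin (n+1), (if (j:ℕ) + 1 = ((j'.castSucc :
            Fin (n+2)):ℕ) then f j j'.castSucc else 0))
          + (if (j:ℕ) + 1 = n + 1 then f j (Fin.last (n+1)) else 0) := by
      intro j
      rw [Fin.sum_univ_castSucc (n := n+1)]
      simp
    simp only [peel]
    rw [Finset.sum_add_distrib]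
    have h1 : ∑ j : Fin (n+1),
        (∑ j' : Fin (n+1), (if (j.castSucc:ℕ) + 1 = ((j'.castSucc : Fin (n+2)):ℕ)
          then f j.castSucc j'.castSucc else 0))
        = ∑ j : Fin n, f j.castSucc.castSucc j.succ.castSucc := by
      have := ih (fun a b => f a.castSucc b.castSucc)
      simp only [Fin.coe_castSucc] at this ⊢
      rw [this]
    rw [h1]
    have h2 : ∑ j : Fin (n+1),
        (if ((j.castSucc : Fin (n+2)):ℕ) + 1 = n + 1 then f j.castSucc (Fin.last (n+1)) else 0)
        = f (Fin.last n).castSucc (Fin.last (n+1)) := by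
      simp only [Fin.coe_castSucc, Nat.add_right_cancel_iff]
      rw [sum_ite_nat (n.lt_succ_self) (fun j => f j.castSucc (Fin.last (n+1)))]
      rfl
    rw [h2]
    have h3 : ∑ j' : Fin (n+1),
        (if ((Fin.last (n+1)):ℕ) + 1 = ((j'.castSucc : Fin (n+2)):ℕ)
          then f (Fin.last (n+1)) j'.castSucc else 0) = 0 := by
      apply sum_ite_false
      intro j
      have := j.is_lt
      simp only [Fin.val_last, Fin.coe_castSucc]
      omega
    rw [h3]
    rw [if_neg (by simp [Fin.val_last]), Fin.sum_univ_castSucc (n := n)]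
    simp [Fin.succ_castSucc, Fin.succ_last, -Fin.castSucc_succ]


lemma shift' (n : ℕ) (f : Fin (n+1) → Fin (n+1) → ℚ) :
    ∑ j : Fin (n+1), ∑ j' : Fin (n+1), (if (j':ℕ) + 1 = (j:ℕ) then f j j' else 0)
    = ∑ j : Fin n, f j.succ j.castSucc := by
  rw [Finset.sum_comm]
  exact shift n (fun a b => f b a)

lemma tri (n : ℕ) (w y : Fin (n+1) → ℚ) :
    ∑ j : Fin (n+1), ∑ j' : Fin (n+1), y j *
      ((if (j:ℕ) = (j':ℕ) then w j else
        if (j:ℕ) + 1 = (j':ℕ) ∨ (j':ℕ) + 1 = (j:ℕ) then (-1:ℚ) else 0) * y j')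
    = ∑ j : Fin (n+1), w j * y j ^ 2
      - 2 * ∑ j : Fin n, y j.castSucc * y j.succ := by
  have split : ∀ j j' : Fin (n+1), y j *
      ((if (j:ℕ) = (j':ℕ) then w j else
        if (j:ℕ) + 1 = (j':ℕ) ∨ (j':ℕ) + 1 = (j:ℕ) then (-1:ℚ) else 0) * y j')
      = (if (j':ℕ) = (j:ℕ) then y j * (w j * y j') else 0)
        + ((if (j:ℕ) + 1 = (j':ℕ) then -(y j * y j') else 0)
        + (if (j':ℕ) + 1 = (j:ℕ) then -(y j * y j') else 0)) := by
    intro j j'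
    split_ifs <;> first | ring1 | (exfalso; omega)
  simp only [split]
  have esplit : ∀ j : Fin (n+1),
      ∑ j' : Fin (n+1), ((if (j':ℕ) = (j:ℕ) then y j * (w j * y j') else 0)
        + ((if (j:ℕ) + 1 = (j':ℕ) then -(y j * y j') else 0)
          + (if (j':ℕ) + 1 = (j:ℕ) then -(y j * y j') else 0)))
      = (∑ j' : Fin (n+1), (if (j':ℕ) = (j:ℕ) then y j * (w j * y j') else 0))
        + ∑ j' : Fin (n+1), ((if (j:ℕ) + 1 = (j':ℕ) then -(y j * y j') else 0)
          + (if (j':ℕ) + 1 = (j:ℕ) then -(y j * y j') else 0)) :=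
    fun j => Finset.sum_add_distrib
  simp only [esplit]
  rw [Finset.sum_add_distrib]
  have e1 : ∀ j : Fin (n+1),
      ∑ j' : Fin (n+1), (if (j':ℕ) = (j:ℕ) then y j * (w j * y j') else 0)
      = y j * (w j * y j) := by
    intro j
    rw [sum_ite_nat j.is_lt (fun j' => y j * (w j * y j'))]
  have e2 : ∀ j : Fin (n+1),
      ∑ j' : Fin (n+1), ((if (j:ℕ) + 1 = (j':ℕ) then -(y j * y j') else 0)
        + (if (j':ℕ) + 1 = (j:ℕ) then -(y j * y j') else 0))
      = (∑ j' : Fin (n+1), (if (j:ℕ) + 1 = (j':ℕ) then -(y j * y j') else 0))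
        + ∑ j' : Fin (n+1), (if (j':ℕ) + 1 = (j:ℕ) then -(y j * y j') else 0) :=
    fun j => Finset.sum_add_distrib
  simp only [e1, e2]
  rw [Finset.sum_add_distrib]
  rw [shift n (fun a b => -(y a * y b)), shift' n (fun a b => -(y a * y b))]
  have f1 : ∑ x : Fin (n+1), y x * (w x * y x) = ∑ j : Fin (n+1), w j * y j ^ 2 :=
    Finset.sum_congr rfl (fun j _ => by ring)
  have g1 : ∑ j : Fin n, -(y j.castSucc * y j.succ)
      = -∑ j : Fin n, y j.castSucc * y j.succ := by
    rw [← Finset.sum_neg_distrib]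
  have g2 : ∑ j : Fin n, -(y j.succ * y j.castSucc)
      = -∑ j : Fin n, y j.castSucc * y j.succ := by
    rw [← Finset.sum_neg_distrib]
    exact Finset.sum_congr rfl (fun j _ => by ring)
  rw [f1, g1, g2]
  ring

lemma arm (n : ℕ) (y : Fin (n+1) → ℚ) :
    (∑ j : Fin (n+1), (2:ℚ) * y j ^ 2) - 2 * ∑ j : Fin n, y j.castSucc * y j.succ
    = y 0 ^ 2 + (∑ j : Fin n, (y j.castSucc - y j.succ) ^ 2) + y (Fin.last n) ^ 2 := by
  induction n with
  | zero => simp [Fin.last_zero]; ring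
  | succ n ih =>
    have IH := ih (fun j => y j.castSucc)
    simp only [Fin.sum_univ_castSucc, Fin.succ_castSucc, Fin.castSucc_zero,
      Fin.succ_last] at IH ⊢
    linarith [IH]

lemma quadId (m : Fin 3 → ℕ) (e : Fin 3 → ℤ)
    (x : Option ((i : Fin 3) × Fin (m i + 1)) → ℚ) :
    dotProduct x ((-(starMatrix 4 (fun i => m i + 1)
        (fun i j => if (j:ℕ) = m i then e i else 2))).mulVec x)
    = x none ^ 2 + ∑ i : Fin 3,
        ((x none - x (some ⟨i, 0⟩)) ^ 2
          + (∑ j : Fin (m i), (x (some ⟨i, j.castSucc⟩) - x (some ⟨i, j.succ⟩)) ^ 2)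
          + ((e i : ℚ) - 1) * x (some ⟨i, Fin.last (m i)⟩) ^ 2) := by
  simp only [dotProduct, Matrix.mulVec, Finset.mul_sum, Matrix.neg_apply,
    Fintype.sum_option, ← Finset.univ_sigma_univ, Finset.sum_sigma, starMatrix]
  have h1 : ∑ i : Fin 3, ∑ j : Fin (m i + 1),
      (-if (j:ℕ) = 0 then (1:ℚ) else 0) * x (some ⟨i, j⟩)
      = ∑ i : Fin 3, -x (some ⟨i, 0⟩) := by
    apply Finset.sum_congr rfl
    intro i _
    have e : ∀ j : Fin (m i + 1), (-if (j:ℕ) = 0 then (1:ℚ) else 0) * x (some ⟨i, j⟩)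
        = if (j:ℕ) = 0 then -x (some ⟨i, j⟩) else 0 := by
      intro j; split_ifs <;> ring
    rw [Finset.sum_congr rfl (fun j _ => e j),
      sum_ite_nat (Nat.succ_pos (m i)) (fun j => -x (some ⟨i, j⟩))]
    norm_num
  rw [h1]
  have hT : ∀ i : Fin 3, ∑ j : Fin (m i + 1),
      x (some ⟨i, j⟩) *
        ((-if (j:ℕ) = 0 then (1:ℚ) else 0) * x none +
          ∑ i' : Fin 3, ∑ j' : Fin (m i' + 1),
            (-if i = i' then
                  if (j:ℕ) = (j':ℕ) then -((if (j:ℕ) = m i then e i else 2 : ℤ) : ℚ)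
                  else if (j:ℕ) + 1 = (j':ℕ) ∨ (j':ℕ) + 1 = (j:ℕ) then 1 else 0
                else 0) * x (some ⟨i', j'⟩))
      = -(x (some ⟨i, 0⟩) * x none)
        + (x (some ⟨i, 0⟩) ^ 2
          + (∑ j : Fin (m i), (x (some ⟨i, j.castSucc⟩) - x (some ⟨i, j.succ⟩)) ^ 2)
          + ((e i : ℚ) - 1) * x (some ⟨i, Fin.last (m i)⟩) ^ 2) := by
    intro i
    have step1 : ∀ j : Fin (m i + 1),
        x (some ⟨i, j⟩) *
          ((-if (j:ℕ) = 0 then (1:ℚ) else 0) * x none +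
            ∑ i' : Fin 3, ∑ j' : Fin (m i' + 1),
              (-if i = i' then
                    if (j:ℕ) = (j':ℕ) then -((if (j:ℕ) = m i then e i else 2 : ℤ) : ℚ)
                    else if (j:ℕ) + 1 = (j':ℕ) ∨ (j':ℕ) + 1 = (j:ℕ) then 1 else 0
                  else 0) * x (some ⟨i', j'⟩))
        = (if (j:ℕ) = 0 then -(x (some ⟨i, j⟩) * x none) else 0)
          + ∑ j' : Fin (m i + 1),
              x (some ⟨i, j⟩) *
                ((if (j:ℕ) = (j':ℕ) then ((if (j:ℕ) = m i then e i else 2 : ℤ) : ℚ)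
                  else if (j:ℕ) + 1 = (j':ℕ) ∨ (j':ℕ) + 1 = (j:ℕ) then (-1:ℚ) else 0)
                  * x (some ⟨i, j'⟩)) := by
      intro j
      rw [mul_add]
      congr 1
      · split_ifs <;> ring
      · rw [Finset.mul_sum, Finset.sum_eq_single i]
        · rw [Finset.mul_sum]
          apply Finset.sum_congr rfl
          intro j' _
          rw [if_pos rfl]
          split_ifs <;> ring
        · intro b _ hb
          rw [Finset.sum_eq_zero, mul_zero]
          intro j' _
          rw [if_neg (Ne.symm hb)]
          ring
        · intro h
          exact absurd (Finset.mem_univ i) h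
    rw [Finset.sum_congr rfl (fun j _ => step1 j), Finset.sum_add_distrib]
    rw [sum_ite_nat (Nat.succ_pos (m i)) (fun j => -(x (some ⟨i, j⟩) * x none))]
    rw [tri (m i) (fun j => ((if (j:ℕ) = m i then e i else 2 : ℤ) : ℚ))
      (fun j => x (some ⟨i, j⟩))]
    have wsplit : ∑ j : Fin (m i + 1),
        ((if (j:ℕ) = m i then e i else 2 : ℤ) : ℚ) * x (some ⟨i, j⟩) ^ 2
        = (∑ j : Fin (m i + 1), (2:ℚ) * x (some ⟨i, j⟩) ^ 2)
          + ((e i : ℚ) - 2) * x (some ⟨i, Fin.last (m i)⟩) ^ 2 := by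
      have e2 : ∀ j : Fin (m i + 1),
          ((if (j:ℕ) = m i then e i else 2 : ℤ) : ℚ) * x (some ⟨i, j⟩) ^ 2
          = (2:ℚ) * x (some ⟨i, j⟩) ^ 2
            + (if (j:ℕ) = m i then ((e i : ℚ) - 2) * x (some ⟨i, j⟩) ^ 2 else 0) := by
        intro j
        split_ifs with h
        · ring
        · norm_num
      rw [Finset.sum_congr rfl (fun j _ => e2 j), Finset.sum_add_distrib,
        sum_ite_nat (Nat.lt_succ_self (m i))
          (fun j => ((e i : ℚ) - 2) * x (some ⟨i, j⟩) ^ 2)]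
      rfl
    rw [wsplit]
    have := arm (m i) (fun j => x (some ⟨i, j⟩))
    simp only [Fin.mk_zero] at *
    linarith [this]
  rw [Finset.sum_congr rfl (fun i _ => hT i)]
  simp only [Fin.sum_univ_three]
  ring

lemma chain_zero (n : ℕ) (y : Fin (n+1) → ℚ) (h0 : y 0 = 0)
    (hs : ∀ j : Fin n, y j.castSucc = y j.succ) : ∀ j, y j = 0 := by
  intro j
  induction j using Fin.induction with
  | zero => exact h0
  | succ j ih => rw [← hs j]; exact ih

lemma key (m : Fin 3 → ℕ) (e : Fin 3 → ℤ) (he : ∀ i, 3 ≤ e i) :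
    (-(starMatrix 4 (fun i => m i + 1)
      (fun i j => if (j:ℕ) = m i then e i else 2))).PosDef := by
  refine Matrix.posDef_iff_dotProduct_mulVec.mpr ⟨?_, ?_⟩
  · apply Matrix.IsHermitian.neg
    unfold Matrix.IsHermitian
    ext v u
    rcases v with _ | ⟨i, j⟩ <;> rcases u with _ | ⟨i', j'⟩ <;>
      simp [starMatrix, Matrix.conjTranspose_apply]
    by_cases h : i = i'
    · subst h
      simp only [if_pos rfl]
      by_cases hj : (j:ℕ) = (j':ℕ)
      · have : j = j' := Fin.ext hj
        subst this
        simp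
      · rw [if_neg hj, if_neg (Ne.symm hj)]
        simp [or_comm]
    · simp [h, Ne.symm h]
  · intro x hx
    have hst : star x = x := by
      funext v
      exact star_trivial _
    rw [hst]
    rw [show dotProduct x ((-(starMatrix 4 (fun i => m i + 1)
        (fun i j => if (j:ℕ) = m i then e i else 2))).mulVec x) = _ from quadId m e x]
    -- positivity
    have hterm : ∀ i : Fin 3, 0 ≤ (x none - x (some ⟨i, 0⟩)) ^ 2
        + (∑ j : Fin (m i), (x (some ⟨i, j.castSucc⟩) - x (some ⟨i, j.succ⟩)) ^ 2)
        + ((e i : ℚ) - 1) * x (some ⟨i, Fin.last (m i)⟩) ^ 2 := by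
      intro i
      have h1 : (0:ℚ) ≤ (e i : ℚ) - 1 := by
        have := he i
        have : (3:ℚ) ≤ (e i : ℚ) := by exact_mod_cast this
        linarith
      have h2 : (0:ℚ) ≤ ∑ j : Fin (m i),
          (x (some ⟨i, j.castSucc⟩) - x (some ⟨i, j.succ⟩)) ^ 2 :=
        Finset.sum_nonneg fun j _ => sq_nonneg _
      have h3 := sq_nonneg (x none - x (some ⟨i, 0⟩))
      have h4 := mul_nonneg h1 (sq_nonneg (x (some ⟨i, Fin.last (m i)⟩)))
      linarith
    have hsum : (0:ℚ) ≤ ∑ i : Fin 3, ((x none - x (some ⟨i, 0⟩)) ^ 2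
        + (∑ j : Fin (m i), (x (some ⟨i, j.castSucc⟩) - x (some ⟨i, j.succ⟩)) ^ 2)
        + ((e i : ℚ) - 1) * x (some ⟨i, Fin.last (m i)⟩) ^ 2) :=
      Finset.sum_nonneg fun i _ => hterm i
    rcases lt_or_eq_of_le (add_nonneg (sq_nonneg (x none)) hsum) with h | h
    · exact h
    exfalso
    -- total is zero: deduce x = 0
    have hc2 : x none ^ 2 = 0 ∧ ∑ i : Fin 3, ((x none - x (some ⟨i, 0⟩)) ^ 2
        + (∑ j : Fin (m i), (x (some ⟨i, j.castSucc⟩) - x (some ⟨i, j.succ⟩)) ^ 2)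
        + ((e i : ℚ) - 1) * x (some ⟨i, Fin.last (m i)⟩) ^ 2) = 0 := by
      constructor <;> nlinarith [sq_nonneg (x none), hsum]
    have hc : x none = 0 := by
      have := hc2.1
      exact pow_eq_zero_iff (n := 2) (by norm_num) |>.mp this
    have hzero : ∀ i : Fin 3, ∀ j : Fin (m i + 1), x (some ⟨i, j⟩) = 0 := by
      intro i
      have hti : (x none - x (some ⟨i, 0⟩)) ^ 2
          + (∑ j : Fin (m i), (x (some ⟨i, j.castSucc⟩) - x (some ⟨i, j.succ⟩)) ^ 2)
          + ((e i : ℚ) - 1) * x (some ⟨i, Fin.last (m i)⟩) ^ 2 = 0 := by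
        have h0 := (Finset.sum_eq_zero_iff_of_nonneg
          (fun i _ => hterm i)).mp hc2.2 i (Finset.mem_univ i)
        exact h0
      have h1 : (0:ℚ) ≤ (e i : ℚ) - 1 := by
        have := he i
        have : (3:ℚ) ≤ (e i : ℚ) := by exact_mod_cast this
        linarith
      have h2 : (0:ℚ) ≤ ∑ j : Fin (m i),
          (x (some ⟨i, j.castSucc⟩) - x (some ⟨i, j.succ⟩)) ^ 2 :=
        Finset.sum_nonneg fun j _ => sq_nonneg _
      have h4 := mul_nonneg h1 (sq_nonneg (x (some ⟨i, Fin.last (m i)⟩)))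
      have h3 := sq_nonneg (x none - x (some ⟨i, 0⟩))
      have hfirst : (x none - x (some ⟨i, 0⟩)) ^ 2 = 0 := by nlinarith
      have hdiffs : ∑ j : Fin (m i),
          (x (some ⟨i, j.castSucc⟩) - x (some ⟨i, j.succ⟩)) ^ 2 = 0 := by nlinarith
      have hy0 : x (some ⟨i, 0⟩) = 0 := by
        have := pow_eq_zero_iff (n := 2) (by norm_num) |>.mp hfirst
        have h5 : x none = x (some ⟨i, 0⟩) := by linarith [sub_eq_zero.mp this]
        rw [← h5, hc]
      have hstep : ∀ j : Fin (m i),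
          x (some ⟨i, j.castSucc⟩) = x (some ⟨i, j.succ⟩) := by
        intro j
        have := (Finset.sum_eq_zero_iff_of_nonneg
          (fun j _ => sq_nonneg _)).mp hdiffs j (Finset.mem_univ j)
        have := pow_eq_zero_iff (n := 2) (by norm_num) |>.mp this
        linarith [sub_eq_zero.mp this]
      exact chain_zero (m i) (fun j => x (some ⟨i, j⟩)) hy0 hstep
    apply hx
    funext v
    rcases v with _ | ⟨i, j⟩
    · exact hc
    · exact hzero i j

/-- The graph `Γ_{p,q,r}`: central vertex of weight `-4`; first arm: `q` vertices of
weight `-2` then one of weight `-(p+3)`; second arm: `r` vertices of weight `-2`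
then one of weight `-(q+3)`; third arm: `p` vertices of weight `-2` then one of
weight `-(r+3)`. Its intersection matrix is negative definite for all
nonnegative integers `p, q, r`. -/
theorem gammaPqr_negDef (p q r : ℕ) :
    (-(starMatrix 4 ![q + 1, r + 1, p + 1]
        (fun i j =>
          if i = 0 then (if (j : ℕ) = q then (p : ℤ) + 3 else 2)
          else if i = 1 then (if (j : ℕ) = r then (q : ℤ) + 3 else 2)
          else (if (j : ℕ) = p then (r : ℤ) + 3 else 2)))).PosDef := by
  have hr : ![q + 1, r + 1, p + 1] = (fun i => ![q, r, p] i + 1) := by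
    funext i
    fin_cases i <;> rfl
  rw [hr]
  have hw : (fun (i : Fin 3) (j : Fin (![q, r, p] i + 1)) =>
      if i = 0 then (if (j : ℕ) = q then (p : ℤ) + 3 else 2)
      else if i = 1 then (if (j : ℕ) = r then (q : ℤ) + 3 else 2)
      else (if (j : ℕ) = p then (r : ℤ) + 3 else 2))
      = (fun (i : Fin 3) (j : Fin (![q, r, p] i + 1)) =>
        if (j : ℕ) = ![q, r, p] i then ![(p:ℤ) + 3, (q:ℤ) + 3, (r:ℤ) + 3] i else 2) := by
    funext i j
    fin_cases i <;> simp <;> rfl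
  rw [hw]
  exact key ![q, r, p] ![(p:ℤ) + 3, (q:ℤ) + 3, (r:ℤ) + 3]
    (by intro i; fin_cases i <;> simp)
end
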